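/- arXiv:math-ph/0305044 — 3 statements merged into one kernel-verified Lean document; each statement's English description precedes it below -/
import Mathlib

section
/- Let N ≥ 1 and let b_0 < a_1 < b_1 < ⋯ < a_N < b_N < a_{N+1} be real numbers. Let A be the N×N matrix with entries A_{kj} = ∫_{a_j}^{b_j} x^{k−1} / R^{1/2}(x) dx for k, j = 1,…,N. Then: (i) all entries of A are real; (ii) A is invertible; (iii) for any α ∈ ℝ, the unique solution (ξ_1,…,ξ_N) ∈ ℂ^N of the linear system Σ_{j=1}^N A_{kj} ξ_j = −(1/(2πi)) ∫_J 2α·log|x| · x^{k−1} / R_+^{1/2}(x) dx (k = 1,…,N) has all entries real. -/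
/-!
On a gap `R` is a positive polynomial, so `R^{1/2}` is real, continuous and nonvanishing there,
and near the endpoints `|R^{1/2}(x)|` is bounded below by a multiple of `√((x - a_j)(b_j - x))`;
hence the entries of `A` are convergent integrals of real functions. If `c A = 0` for a real row
vector `c`, the polynomial `P = ∑ c_k x^k` satisfies `∫_{gap j} P / R^{1/2} = 0` for every `j`, so
`P` has a zero in each of the `N` disjoint gaps; as `deg P < N` the Vandermonde determinant forces
`c = 0`. On a band `R < 0`, so the boundary value `R_+^{1/2}` is purely imaginary and the right-hand
side of the system is real; then `conj ξ` solves the same real invertible system, so `ξ = conj ξ`.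
-/

open MeasureTheory Filter Set intervalIntegral

/-- `R(z) = ∏_{j=1}^{N+1} (z − b_{j−1})(z − a_j)`, reindexed as
`∏_{j=0}^{N} (z − b_j)(z − a_{j+1})`. -/
noncomputable def Rpoly (N : ℕ) (a b : ℕ → ℝ) (z : ℂ) : ℂ :=
  ∏ j ∈ Finset.range (N + 1), ((z - (b j : ℂ)) * (z - (a (j + 1) : ℂ)))

lemma sub_mul_sub_pos_of_notMem_Icc {p q x : ℝ} (hpq : p ≤ q) (hx : x ∉ Icc p q) :
    0 < (x - p) * (x - q) := by
  rcases not_and_or.1 hx with hx | hx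
  · exact mul_pos_of_neg_of_neg (by linarith) (by linarith)
  · exact mul_pos (by linarith) (by linarith)

lemma Real.inv_sqrt_mul_sqrt_mul_sqrt_le {m u v : ℝ} (hm : 0 < m) (hu : 0 < u) (hv : 0 < v) :
    (√m * (√u * √v))⁻¹ ≤ (√(m * (u + v)))⁻¹ * ((√u)⁻¹ + (√v)⁻¹) := by
  have hsu := Real.sqrt_pos.2 hu
  have hsv := Real.sqrt_pos.2 hv
  have hsum : √(m * (u + v)) ≤ √m * (√u + √v) := by
    rw [Real.sqrt_mul hm.le]
    gcongr
    rw [Real.sqrt_le_left (by positivity)]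
    nlinarith [Real.sq_sqrt hu.le, Real.sq_sqrt hv.le]
  calc (√m * (√u * √v))⁻¹ = (√m * (√u + √v))⁻¹ * ((√u)⁻¹ + (√v)⁻¹) := by
        field_simp
        ring
    _ ≤ (√(m * (u + v)))⁻¹ * ((√u)⁻¹ + (√v)⁻¹) := by
      gcongr

lemma exists_pos_mul_le_abs_of_eq_mul {R q : ℝ → ℝ} {A B : ℝ} (hAB : A ≤ B)
    (hq : ContinuousOn q (Icc A B)) (hq0 : ∀ x ∈ Icc A B, q x ≠ 0)
    (hR : ∀ x, R x = (x - A) * (x - B) * q x) :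
    ∃ m > 0, ∀ x ∈ Icc A B, m * ((x - A) * (B - x)) ≤ |R x| := by
  obtain ⟨x₀, hx₀, hmin⟩ := isCompact_Icc.exists_isMinOn (nonempty_Icc.2 hAB) hq.abs
  refine ⟨|q x₀|, abs_pos.2 (hq0 x₀ hx₀), fun x hx => ?_⟩
  have hAx : 0 ≤ (x - A) * (B - x) := mul_nonneg (sub_nonneg.2 hx.1) (sub_nonneg.2 hx.2)
  calc |q x₀| * ((x - A) * (B - x)) ≤ |q x| * ((x - A) * (B - x)) :=
        mul_le_mul_of_nonneg_right (hmin hx) hAx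
    _ = |R x| := by rw [hR, abs_mul, abs_mul, abs_sub_comm x B,
          abs_of_nonneg (sub_nonneg.2 hx.1), abs_of_nonneg (sub_nonneg.2 hx.2)]; ring

lemma IsPreconnected.pos_of_ne_zero {α : Type*} [TopologicalSpace α] {s : Set α} {f : α → ℝ}
    (hs : IsPreconnected s) (hf : ContinuousOn f s) (h0 : ∀ x ∈ s, f x ≠ 0) {x y : α}
    (hx : x ∈ s) (hy : y ∈ s) (hfx : 0 < f x) : 0 < f y := by
  by_contra! hfy
  obtain ⟨z, hz, hfz⟩ := hs.intermediate_value hy hx hf ⟨hfy, hfx.le⟩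
  exact h0 z hz hfz

namespace intervalIntegral

lemma integral_ne_zero_of_continuousOn_of_ne_zero {f : ℝ → ℝ} {s t : ℝ} (hst : s < t)
    (hf : ContinuousOn f (Ioo s t)) (h0 : ∀ x ∈ Ioo s t, f x ≠ 0)
    (hfi : IntervalIntegrable f volume s t) : ∫ x in s..t, f x ≠ 0 := by
  obtain ⟨x₀, hx₀⟩ := nonempty_Ioo.2 hst
  rcases (h0 x₀ hx₀).lt_or_gt with hneg | hpos
  · have hneg_pos : ∀ x ∈ Ioo s t, 0 < -f x := fun x hx =>
      isPreconnected_Ioo.pos_of_ne_zero hf.neg (fun y hy => neg_ne_zero.2 (h0 y hy)) hx₀ hx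
        (neg_pos.2 hneg)
    have := intervalIntegral_pos_of_pos_on hfi.neg hneg_pos hst
    rw [show (-f) = fun x => -f x from rfl, integral_neg] at this
    exact (neg_pos.1 this).ne
  · exact (intervalIntegral_pos_of_pos_on hfi
      (fun x hx => isPreconnected_Ioo.pos_of_ne_zero hf h0 hx₀ hx hpos) hst).ne'

lemma intervalIntegrable_inv_of_mul_le_sq {f : ℝ → ℝ} {A B m : ℝ} (hAB : A < B) (hm : 0 < m)
    (hf : ContinuousOn f (Ioo A B)) (hlow : ∀ x ∈ Ioo A B, m * ((x - A) * (B - x)) ≤ f x ^ 2) :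
    IntervalIntegrable (fun x => (f x)⁻¹) volume A B := by
  have hfx : ∀ x ∈ Ioo A B, √m * (√(x - A) * √(B - x)) ≤ |f x| := fun x hx => by
    rw [← Real.sqrt_sq_eq_abs, ← Real.sqrt_mul (by linarith [hx.1]), ← Real.sqrt_mul hm.le]
    exact Real.sqrt_le_sqrt (hlow x hx)
  have hfx_pos : ∀ x ∈ Ioo A B, 0 < √m * (√(x - A) * √(B - x)) := fun x hx => by
    have := Real.sqrt_pos.2 (sub_pos.2 hx.1)
    have := Real.sqrt_pos.2 (sub_pos.2 hx.2)
    positivity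
  have hg : IntervalIntegrable (fun x => (√(m * (B - A)))⁻¹ *
      ((x - A) ^ (-(1 / 2) : ℝ) + (B - x) ^ (-(1 / 2) : ℝ))) volume A B := by
    have hr := intervalIntegrable_rpow' (a := 0) (b := B - A) (r := -(1 / 2)) (by norm_num)
    refine (IntervalIntegrable.add ?_ ?_).const_mul _
    · simpa using hr.comp_sub_right A
    · simpa using (hr.comp_sub_left B).symm
  rw [intervalIntegrable_iff_integrableOn_Ioo_of_le hAB.le] at hg ⊢
  refine hg.mono' ((hf.inv₀ fun x hx => abs_pos.1 ((hfx_pos x hx).trans_le (hfx x hx))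
    ).aestronglyMeasurable measurableSet_Ioo) ?_
  filter_upwards [ae_restrict_mem measurableSet_Ioo] with x hx
  rw [norm_inv, Real.norm_eq_abs, Real.rpow_neg (sub_pos.2 hx.1).le,
    Real.rpow_neg (sub_pos.2 hx.2).le, ← Real.sqrt_eq_rpow, ← Real.sqrt_eq_rpow]
  calc |f x|⁻¹ ≤ (√m * (√(x - A) * √(B - x)))⁻¹ := inv_anti₀ (hfx_pos x hx) (hfx x hx)
    _ ≤ _ := by
      simpa using Real.inv_sqrt_mul_sqrt_mul_sqrt_le hm (sub_pos.2 hx.1) (sub_pos.2 hx.2)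

end intervalIntegral

namespace Complex

lemma im_eq_zero_of_sq_eq_ofReal {c : ℂ} {r : ℝ} (h : c ^ 2 = r) (hr : 0 ≤ r) : c.im = 0 := by
  have : c ^ 2 = (√r : ℂ) ^ 2 := by rw [← ofReal_pow, Real.sq_sqrt hr, h]
  rcases sq_eq_sq_iff_eq_or_eq_neg.1 this with rfl | rfl <;> simp

lemma re_eq_zero_of_sq_eq_ofReal {c : ℂ} {r : ℝ} (h : c ^ 2 = r) (hr : r ≤ 0) : c.re = 0 := by
  have : c ^ 2 = (√(-r) * I) ^ 2 := by
    rw [mul_pow, I_sq, ← ofReal_pow, Real.sq_sqrt (neg_nonneg.2 hr), h]; push_cast; ring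
  rcases sq_eq_sq_iff_eq_or_eq_neg.1 this with rfl | rfl <;> simp

lemma re_intervalIntegral_eq_zero {f : ℝ → ℂ} {s t : ℝ} (hst : s ≤ t)
    (hf : ∀ x ∈ Ioo s t, (f x).re = 0) : (∫ x in s..t, f x).re = 0 := by
  have : ∫ x in s..t, f x = ∫ x in s..t, ((f x).im : ℂ) * I :=
    integral_congr_Ioo_of_le hst fun x hx => by
      conv_lhs => rw [← re_add_im (f x), hf x hx]
      simp
  rw [this, intervalIntegral.integral_mul_const, integral_ofReal]
  simp

end Complex

namespace Matrix

theorem det_of_moments_ne_zero {n : ℕ} {s t : Fin n → ℝ} {w : ℝ → ℝ}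
    (hst : ∀ j, s j < t j)
    (hdisj : Pairwise fun i j => Disjoint (Ioo (s i) (t i)) (Ioo (s j) (t j)))
    (hw : ∀ j, ContinuousOn w (Ioo (s j) (t j))) (hw0 : ∀ j, ∀ x ∈ Ioo (s j) (t j), w x ≠ 0)
    (hwi : ∀ j (k : Fin n), IntervalIntegrable (fun x => x ^ (k : ℕ) * w x) volume (s j) (t j)) :
    (of fun k j : Fin n => ∫ x in s j..t j, x ^ (k : ℕ) * w x).det ≠ 0 := by
  intro hdet
  obtain ⟨c, hc, hcM⟩ := exists_vecMul_eq_zero_iff.2 hdet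
  set P : ℝ → ℝ := fun x => ∑ k : Fin n, x ^ (k : ℕ) * c k
  have hPw : ∀ x, P x * w x = ∑ k : Fin n, c k * (x ^ (k : ℕ) * w x) := fun x => by
    simp only [P, Finset.sum_mul]
    exact Finset.sum_congr rfl fun k _ => by ring
  have hPwi : ∀ j, IntervalIntegrable (fun x => P x * w x) volume (s j) (t j) := fun j => by
    simp only [hPw]
    simpa only [Finset.sum_fn] using
      IntervalIntegrable.sum Finset.univ fun k _ => (hwi j k).const_mul (c k)
  have hPw_int : ∀ j, ∫ x in s j..t j, P x * w x = 0 := fun j => by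
    simp only [hPw]
    rw [intervalIntegral.integral_finsetSum fun k _ => (hwi j k).const_mul (c k)]
    simpa only [intervalIntegral.integral_const_mul, vecMul, dotProduct, of_apply,
      Pi.zero_apply] using congrFun hcM j
  have hroot : ∀ j, ∃ x ∈ Ioo (s j) (t j), P x = 0 := fun j => by
    by_contra! hP
    refine integral_ne_zero_of_continuousOn_of_ne_zero (hst j) ?_
      (fun x hx => mul_ne_zero (hP x hx) (hw0 j x hx)) (hPwi j) (hPw_int j)
    exact ((continuous_finsetSum _ fun k _ => by fun_prop).continuousOn).mul (hw j)
  choose x hx hPx using hroot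
  have hinj : Function.Injective x := fun u v huv =>
    hdisj.eq (not_disjoint_iff.2 ⟨x u, hx u, huv ▸ hx v⟩)
  exact hc (eq_zero_of_mulVec_eq_zero (det_vandermonde_ne_zero_iff.2 hinj) (funext hPx))

theorem im_eq_zero_of_mulVec_eq {n : Type*} [Fintype n] [DecidableEq n] {A : Matrix n n ℂ}
    (hA : IsUnit A) (hAim : ∀ i j, (A i j).im = 0) {ξ r : n → ℂ} (h : A *ᵥ ξ = r)
    (hr : ∀ i, (r i).im = 0) (j : n) : (ξ j).im = 0 := by
  have hstar : A *ᵥ star ξ = A *ᵥ ξ := by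
    ext i
    have hi := congrFun h i
    simp only [mulVec, dotProduct] at hi ⊢
    rw [hi, ← Complex.conj_eq_iff_im.2 (hr i), ← hi, map_sum]
    refine Finset.sum_congr rfl fun k _ => ?_
    rw [map_mul, Complex.conj_eq_iff_im.2 (hAim i k)]
    rfl
  exact Complex.conj_eq_iff_im.1 (congrFun (mulVec_injective_iff_isUnit.2 hA hstar) j)

end Matrix

noncomputable def realR (N : ℕ) (a b : ℕ → ℝ) (x : ℝ) : ℝ :=
  ∏ j ∈ Finset.range (N + 1), (x - b j) * (x - a (j + 1))

lemma Rpoly_ofReal (N : ℕ) (a b : ℕ → ℝ) (x : ℝ) : Rpoly N a b x = realR N a b x := by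
  simp [Rpoly, realR]

def closedBands (N : ℕ) (a b : ℕ → ℝ) : Set ℂ :=
  {z | z.im = 0 ∧ ∃ j ≤ N, b j ≤ z.re ∧ z.re ≤ a (j + 1)}

/-- Band `j ≤ N` is `(b j, a (j + 1))`; the gap between bands `i` and `i + 1` is
`(a (i + 1), b (i + 1))`, so gaps are indexed by `i < N` (the paper's gap `i + 1`). -/
structure Interlaced (N : ℕ) (a b : ℕ → ℝ) : Prop where
  band_lt : ∀ j ≤ N, b j < a (j + 1)
  gap_lt : ∀ j, 1 ≤ j → j ≤ N → a j < b j

lemma sq_eq_Rpoly_of_tendsto {N : ℕ} {a b : ℕ → ℝ} {Rhalf : ℂ → ℂ}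
    (hRsq : ∀ z ∉ closedBands N a b, Rhalf z ^ 2 = Rpoly N a b z) {x : ℝ} {L : ℂ}
    (hL : Tendsto (fun ε : ℝ => Rhalf (x + ε * Complex.I)) (nhdsWithin 0 (Ioi 0)) (nhds L)) :
    L ^ 2 = Rpoly N a b x := by
  have hpoly : Continuous (Rpoly N a b) := by unfold Rpoly; fun_prop
  have hpath : Tendsto (fun ε : ℝ => (x : ℂ) + ε * Complex.I) (nhdsWithin 0 (Ioi 0)) (nhds x) :=
    tendsto_nhdsWithin_of_tendsto_nhds <|
      (by fun_prop : Continuous fun ε : ℝ => (x : ℂ) + ε * Complex.I).tendsto' 0 x (by simp)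
  refine tendsto_nhds_unique (hL.pow 2) (((hpoly.tendsto _).comp hpath).congr' ?_)
  filter_upwards [self_mem_nhdsWithin] with ε (hε : 0 < ε)
  exact (hRsq _ fun hz => hε.ne' (by simpa using hz.1)).symm

namespace Interlaced

variable {N : ℕ} {a b : ℕ → ℝ} {Rhalf : ℂ → ℂ}

lemma b_lt_a (h : Interlaced N a b) {i k : ℕ} (hik : i ≤ k) (hk : k ≤ N) : b i < a (k + 1) := by
  induction k, hik using Nat.le_induction with
  | base => exact h.band_lt i hk
  | succ k _ ih =>
    calc b i < a (k + 1) := ih (by omega)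
      _ < b (k + 1) := h.gap_lt (k + 1) (by omega) hk
      _ < a (k + 1 + 1) := h.band_lt (k + 1) hk

lemma a_lt_b (h : Interlaced N a b) {i k : ℕ} (hik : i < k) (hk : k ≤ N) : a (i + 1) < b k := by
  induction k, hik using Nat.le_induction with
  | base => exact h.gap_lt (i + 1) (by omega) hk
  | succ k _ ih =>
    calc a (i + 1) < b k := ih (by omega)
      _ < a (k + 1) := h.band_lt k (by omega)
      _ < b (k + 1) := h.gap_lt (k + 1) (by omega) hk

lemma eq_of_mem_band_of_mem_band (h : Interlaced N a b) {i k : ℕ} (hi : i ≤ N) (hk : k ≤ N)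
    {x : ℝ} (hxi : x ∈ Icc (b i) (a (i + 1))) (hxk : x ∈ Icc (b k) (a (k + 1))) : i = k := by
  by_contra hne
  rcases Nat.lt_or_gt_of_ne hne with hlt | hlt
  · linarith [h.a_lt_b hlt hk, hxi.2, hxk.1]
  · linarith [h.a_lt_b hlt hi, hxk.2, hxi.1]

lemma eq_or_eq_succ_of_mem_gap_of_mem_band (h : Interlaced N a b) {i k : ℕ} (hi : i < N)
    (hk : k ≤ N) {x : ℝ} (hxi : x ∈ Icc (a (i + 1)) (b (i + 1)))
    (hxk : x ∈ Icc (b k) (a (k + 1))) : k = i ∨ k = i + 1 := by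
  by_contra! hne
  rcases Nat.lt_or_gt_of_ne hne.1 with hlt | hlt
  · linarith [h.a_lt_b hlt hi.le, h.b_lt_a le_rfl hi.le, hxk.2, hxi.1]
  · linarith [h.b_lt_a le_rfl hi, h.a_lt_b (show i + 1 < k by omega) hk, hxk.1, hxi.2]

lemma notMem_band_of_mem_gap (h : Interlaced N a b) {i k : ℕ} (hi : i < N) (hk : k ≤ N) {x : ℝ}
    (hx : x ∈ Ioo (a (i + 1)) (b (i + 1))) : x ∉ Icc (b k) (a (k + 1)) := fun hxk => by
  rcases h.eq_or_eq_succ_of_mem_gap_of_mem_band hi hk (Ioo_subset_Icc_self hx) hxk with rfl | rfl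
  · linarith [hx.1, hxk.2]
  · linarith [hx.2, hxk.1]

lemma ofReal_notMem_closedBands (h : Interlaced N a b) {i : ℕ} (hi : i < N) {x : ℝ}
    (hx : x ∈ Ioo (a (i + 1)) (b (i + 1))) : (x : ℂ) ∉ closedBands N a b :=
  fun ⟨_, k, hk, hxk⟩ => h.notMem_band_of_mem_gap hi hk hx (by simpa using hxk)

lemma pairwise_disjoint_gaps (h : Interlaced N a b) :
    Pairwise fun i j : Fin N =>
      Disjoint (Ioo (a (i + 1)) (b (i + 1))) (Ioo (a (j + 1)) (b (j + 1))) := by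
  intro i j hij
  refine Set.disjoint_left.2 fun x hxi hxj => ?_
  rcases lt_or_gt_of_ne hij with hlt | hlt
  · linarith [h.b_lt_a (show (i : ℕ) + 1 ≤ j by omega) j.isLt.le, hxi.2, hxj.1]
  · linarith [h.b_lt_a (show (j : ℕ) + 1 ≤ i by omega) i.isLt.le, hxj.2, hxi.1]

lemma realR_pos_of_mem_gap (h : Interlaced N a b) {i : ℕ} (hi : i < N) {x : ℝ}
    (hx : x ∈ Ioo (a (i + 1)) (b (i + 1))) : 0 < realR N a b x :=
  Finset.prod_pos fun k hk => sub_mul_sub_pos_of_notMem_Icc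
    (h.band_lt k (Finset.mem_range_succ_iff.1 hk)).le
    (h.notMem_band_of_mem_gap hi (Finset.mem_range_succ_iff.1 hk) hx)

lemma realR_neg_of_mem_band (h : Interlaced N a b) {i : ℕ} (hi : i ≤ N) {x : ℝ}
    (hx : x ∈ Ioo (b i) (a (i + 1))) : realR N a b x < 0 := by
  rw [realR, ← Finset.mul_prod_erase _ _ (Finset.mem_range_succ_iff.2 hi)]
  refine mul_neg_of_neg_of_pos (mul_neg_of_pos_of_neg (sub_pos.2 hx.1) (sub_neg.2 hx.2))
    (Finset.prod_pos fun k hk => ?_)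
  obtain ⟨hki, hk⟩ := Finset.mem_erase.1 hk
  have hkN := Finset.mem_range_succ_iff.1 hk
  exact sub_mul_sub_pos_of_notMem_Icc (h.band_lt k hkN).le fun hxk =>
    hki (h.eq_of_mem_band_of_mem_band hkN hi hxk (Ioo_subset_Icc_self hx))

lemma exists_pos_mul_le_realR (h : Interlaced N a b) {i : ℕ} (hi : i < N) :
    ∃ m > 0, ∀ x ∈ Icc (a (i + 1)) (b (i + 1)),
      m * ((x - a (i + 1)) * (b (i + 1) - x)) ≤ |realR N a b x| := by
  have hi_mem : i ∈ Finset.range (N + 1) := Finset.mem_range.2 (by omega)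
  have hi1_mem : i + 1 ∈ (Finset.range (N + 1)).erase i :=
    Finset.mem_erase.2 ⟨by omega, Finset.mem_range.2 (by omega)⟩
  refine exists_pos_mul_le_abs_of_eq_mul (h.gap_lt (i + 1) (by omega) hi).le
    (q := fun x => (x - b i) * (x - a (i + 1 + 1)) *
      ∏ k ∈ ((Finset.range (N + 1)).erase i).erase (i + 1), (x - b k) * (x - a (k + 1)))
    (by fun_prop) (fun x hx => ?_) fun x => ?_
  · refine mul_ne_zero (mul_ne_zero ?_ ?_) (Finset.prod_ne_zero_iff.2 fun k hk => ?_)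
    · linarith [h.band_lt i hi.le, hx.1]
    · linarith [h.band_lt (i + 1) hi, hx.2]
    · obtain ⟨hki1, hk⟩ := Finset.mem_erase.1 hk
      obtain ⟨hki, hk⟩ := Finset.mem_erase.1 hk
      have hkN := Finset.mem_range_succ_iff.1 hk
      refine (sub_mul_sub_pos_of_notMem_Icc (h.band_lt k hkN).le fun hxk => ?_).ne'
      rcases h.eq_or_eq_succ_of_mem_gap_of_mem_band hi hkN hx hxk with rfl | rfl <;> contradiction
  · rw [realR, ← Finset.mul_prod_erase _ _ hi_mem, ← Finset.mul_prod_erase _ _ hi1_mem]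
    ring

lemma Rhalf_eq_re_of_mem_gap (h : Interlaced N a b)
    (hRsq : ∀ z ∉ closedBands N a b, Rhalf z ^ 2 = Rpoly N a b z) {i : ℕ} (hi : i < N) {x : ℝ}
    (hx : x ∈ Ioo (a (i + 1)) (b (i + 1))) : Rhalf x = (Rhalf x).re := by
  have hsq : Rhalf x ^ 2 = realR N a b x := by
    rw [hRsq _ (h.ofReal_notMem_closedBands hi hx), Rpoly_ofReal]
  exact Complex.ext rfl (by
    simpa using Complex.im_eq_zero_of_sq_eq_ofReal hsq (h.realR_pos_of_mem_gap hi hx).le)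

lemma sq_re_Rhalf_of_mem_gap (h : Interlaced N a b)
    (hRsq : ∀ z ∉ closedBands N a b, Rhalf z ^ 2 = Rpoly N a b z) {i : ℕ} (hi : i < N) {x : ℝ}
    (hx : x ∈ Ioo (a (i + 1)) (b (i + 1))) : (Rhalf x).re ^ 2 = realR N a b x := by
  have := hRsq _ (h.ofReal_notMem_closedBands hi hx)
  rw [h.Rhalf_eq_re_of_mem_gap hRsq hi hx, Rpoly_ofReal] at this
  exact_mod_cast this

lemma re_Rhalf_ne_zero_of_mem_gap (h : Interlaced N a b)
    (hRsq : ∀ z ∉ closedBands N a b, Rhalf z ^ 2 = Rpoly N a b z) {i : ℕ} (hi : i < N) {x : ℝ}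
    (hx : x ∈ Ioo (a (i + 1)) (b (i + 1))) : (Rhalf x).re ≠ 0 := fun h0 => by
  have := h.sq_re_Rhalf_of_mem_gap hRsq hi hx
  rw [h0, zero_pow two_ne_zero] at this
  exact (h.realR_pos_of_mem_gap hi hx).ne this

lemma continuousOn_re_Rhalf_gap (h : Interlaced N a b)
    (hRan : ∀ z ∉ closedBands N a b, AnalyticAt ℂ Rhalf z) {i : ℕ} (hi : i < N) :
    ContinuousOn (fun x : ℝ => (Rhalf x).re) (Ioo (a (i + 1)) (b (i + 1))) := fun _ hx =>
  (Complex.continuous_re.continuousAt.comp ((hRan _ (h.ofReal_notMem_closedBands hi hx)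
    ).continuousAt.comp Complex.continuous_ofReal.continuousAt)).continuousWithinAt

lemma intervalIntegrable_pow_mul_inv_re_Rhalf (h : Interlaced N a b)
    (hRan : ∀ z ∉ closedBands N a b, AnalyticAt ℂ Rhalf z)
    (hRsq : ∀ z ∉ closedBands N a b, Rhalf z ^ 2 = Rpoly N a b z) {i : ℕ} (hi : i < N) (k : ℕ) :
    IntervalIntegrable (fun x => x ^ k * ((Rhalf x).re)⁻¹) volume (a (i + 1)) (b (i + 1)) := by
  obtain ⟨m, hm, hlow⟩ := h.exists_pos_mul_le_realR hi
  refine (intervalIntegrable_inv_of_mul_le_sq (h.gap_lt (i + 1) (by omega) hi) hm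
    (h.continuousOn_re_Rhalf_gap hRan hi) fun x hx => ?_).continuousOn_mul (by fun_prop)
  rw [h.sq_re_Rhalf_of_mem_gap hRsq hi hx, ← abs_of_pos (h.realR_pos_of_mem_gap hi hx)]
  exact hlow x (Ioo_subset_Icc_self hx)

lemma integral_gap_eq_ofReal (h : Interlaced N a b)
    (hRsq : ∀ z ∉ closedBands N a b, Rhalf z ^ 2 = Rpoly N a b z) {i : ℕ} (hi : i < N) (k : ℕ) :
    ∫ x in a (i + 1)..b (i + 1), (x : ℂ) ^ k / Rhalf x =
      ↑(∫ x in a (i + 1)..b (i + 1), x ^ k * ((Rhalf x).re)⁻¹) := by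
  rw [← integral_ofReal]
  refine integral_congr_Ioo_of_le (h.gap_lt (i + 1) (by omega) hi).le fun x hx => ?_
  conv_lhs => rw [h.Rhalf_eq_re_of_mem_gap hRsq hi hx]
  push_cast
  rfl

lemma re_integral_ofReal_div_Rplus_eq_zero (h : Interlaced N a b) {Rplus : ℝ → ℂ}
    (hRsq : ∀ z ∉ closedBands N a b, Rhalf z ^ 2 = Rpoly N a b z)
    (hRplus : ∀ x : ℝ, (∃ j ≤ N, b j < x ∧ x < a (j + 1)) →
      Tendsto (fun ε : ℝ => Rhalf (x + ε * Complex.I)) (nhdsWithin 0 (Ioi 0)) (nhds (Rplus x)))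
    {i : ℕ} (hi : i ≤ N) (g : ℝ → ℝ) :
    (∫ x in b i..a (i + 1), (g x : ℂ) / Rplus x).re = 0 := by
  refine Complex.re_intervalIntegral_eq_zero (h.band_lt i hi).le fun x hx => ?_
  have hRplus_re : (Rplus x).re = 0 := Complex.re_eq_zero_of_sq_eq_ofReal
    (by rw [sq_eq_Rpoly_of_tendsto hRsq (hRplus x ⟨i, hi, hx⟩), Rpoly_ofReal])
    (h.realR_neg_of_mem_band hi hx).le
  simp only [Complex.div_re, Complex.ofReal_re, Complex.ofReal_im, hRplus_re]
  ring

end Interlaced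

theorem szego_system_real_invertible_general
    (N : ℕ) (a b : ℕ → ℝ)
    (hband : ∀ j ≤ N, b j < a (j + 1))
    (hgap : ∀ j, 1 ≤ j → j ≤ N → a j < b j)
    (Rhalf : ℂ → ℂ)
    (hRan : ∀ z : ℂ, ¬(z.im = 0 ∧ ∃ j ≤ N, b j ≤ z.re ∧ z.re ≤ a (j + 1)) →
      AnalyticAt ℂ Rhalf z)
    (hRsq : ∀ z : ℂ, ¬(z.im = 0 ∧ ∃ j ≤ N, b j ≤ z.re ∧ z.re ≤ a (j + 1)) →
      (Rhalf z) ^ 2 = Rpoly N a b z)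
    (Rplus : ℝ → ℂ)
    (hRplus : ∀ x : ℝ, (∃ j ≤ N, b j < x ∧ x < a (j + 1)) →
      Tendsto (fun ε : ℝ => Rhalf ((x : ℂ) + ε * Complex.I))
        (nhdsWithin 0 (Ioi 0)) (nhds (Rplus x)))
    (α : ℝ)
    (A : Matrix (Fin N) (Fin N) ℂ)
    (hA : ∀ k j : Fin N, A k j =
      ∫ x in (a ((j : ℕ) + 1))..(b ((j : ℕ) + 1)), ((x : ℂ) ^ (k : ℕ) / Rhalf (x : ℂ))) :
    (∀ k j : Fin N, (A k j).im = 0) ∧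
    IsUnit A ∧
    (∀ ξ : Fin N → ℂ,
      (∀ k : Fin N, ∑ j : Fin N, A k j * ξ j =
        -(1 / (2 * (Real.pi : ℂ) * Complex.I)) *
          ∑ i ∈ Finset.range (N + 1),
            ∫ x in (b i)..(a (i + 1)),
              (2 * (α : ℂ) * (Real.log |x| : ℂ) * (x : ℂ) ^ (k : ℕ) / Rplus x)) →
      ∀ j : Fin N, (ξ j).im = 0) := by
  have h : Interlaced N a b := ⟨hband, hgap⟩
  set M : Matrix (Fin N) (Fin N) ℝ :=
    Matrix.of fun k j => ∫ x in a (j + 1)..b (j + 1), x ^ (k : ℕ) * ((Rhalf x).re)⁻¹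
  have hAM : A = Complex.ofRealHom.mapMatrix M :=
    Matrix.ext fun k j => (hA k j).trans (h.integral_gap_eq_ofReal hRsq j.isLt k)
  have hAim : ∀ k j, (A k j).im = 0 := fun k j => by rw [hAM]; exact Complex.ofReal_im _
  have hM : M.det ≠ 0 := Matrix.det_of_moments_ne_zero
    (fun j => hgap _ (by omega) j.isLt) h.pairwise_disjoint_gaps
    (fun j => (h.continuousOn_re_Rhalf_gap hRan j.isLt).inv₀
      fun x hx => h.re_Rhalf_ne_zero_of_mem_gap hRsq j.isLt hx)
    (fun j x hx => inv_ne_zero (h.re_Rhalf_ne_zero_of_mem_gap hRsq j.isLt hx))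
    (fun j k => h.intervalIntegrable_pow_mul_inv_re_Rhalf hRan hRsq j.isLt k)
  have hunit : IsUnit A :=
    hAM ▸ ((M.isUnit_iff_isUnit_det).2 hM.isUnit).map Complex.ofRealHom.mapMatrix
  refine ⟨hAim, hunit, fun ξ hξ => Matrix.im_eq_zero_of_mulVec_eq hunit hAim (funext hξ)
    fun k => ?_⟩
  have hS : (∑ i ∈ Finset.range (N + 1), ∫ x in b i..a (i + 1),
      2 * (α : ℂ) * (Real.log |x| : ℂ) * (x : ℂ) ^ (k : ℕ) / Rplus x).re = 0 := by
    rw [Complex.re_sum]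
    refine Finset.sum_eq_zero fun i hi => ?_
    simpa using h.re_integral_ofReal_div_Rplus_eq_zero hRsq hRplus
      (Finset.mem_range_succ_iff.1 hi) fun x => 2 * α * Real.log |x| * x ^ (k : ℕ)
  have hc : (-(1 / (2 * (Real.pi : ℂ) * Complex.I))).re = 0 := by simp
  rw [Complex.mul_im, hc, hS]
  ring

/-- The matrix `A` with entries `A_{kj} = ∫_{a_j}^{b_j} x^{k−1}/R^{1/2}(x) dx` has real
entries, is invertible, and the solution of the linear system defining the Szegő constants
`ξ_1, …, ξ_N` has all entries real. -/
theorem szego_system_real_invertible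
    (N : ℕ) (hN : 1 ≤ N) (a b : ℕ → ℝ)
    (hband : ∀ j ≤ N, b j < a (j + 1))
    (hgap : ∀ j, 1 ≤ j → j ≤ N → a j < b j)
    (Rhalf : ℂ → ℂ)
    (hRan : ∀ z : ℂ, ¬(z.im = 0 ∧ ∃ j ≤ N, b j ≤ z.re ∧ z.re ≤ a (j + 1)) →
      AnalyticAt ℂ Rhalf z)
    (hRsq : ∀ z : ℂ, ¬(z.im = 0 ∧ ∃ j ≤ N, b j ≤ z.re ∧ z.re ≤ a (j + 1)) →
      (Rhalf z) ^ 2 = Rpoly N a b z)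
    (hRinf : Tendsto (fun z : ℂ => Rhalf z / z ^ (N + 1)) (cocompact ℂ) (nhds 1))
    (Rplus : ℝ → ℂ)
    (hRplus : ∀ x : ℝ, (∃ j ≤ N, b j < x ∧ x < a (j + 1)) →
      Tendsto (fun ε : ℝ => Rhalf ((x : ℂ) + ε * Complex.I))
        (nhdsWithin 0 (Ioi 0)) (nhds (Rplus x)))
    (α : ℝ)
    (A : Matrix (Fin N) (Fin N) ℂ)
    (hA : ∀ k j : Fin N, A k j =
      ∫ x in (a ((j : ℕ) + 1))..(b ((j : ℕ) + 1)), ((x : ℂ) ^ (k : ℕ) / Rhalf (x : ℂ))) :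
    (∀ k j : Fin N, (A k j).im = 0) ∧
    IsUnit A ∧
    (∀ ξ : Fin N → ℂ,
      (∀ k : Fin N, ∑ j : Fin N, A k j * ξ j =
        -(1 / (2 * (Real.pi : ℂ) * Complex.I)) *
          ∑ i ∈ Finset.range (N + 1),
            ∫ x in (b i)..(a (i + 1)),
              (2 * (α : ℂ) * (Real.log |x| : ℂ) * (x : ℂ) ^ (k : ℕ) / Rplus x)) →
      ∀ j : Fin N, (ξ j).im = 0) :=
  szego_system_real_invertible_general N a b hband hgap Rhalf hRan hRsq Rplus hRplus α A hA
end

section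
/- Let μ be a probability measure on ℝ that is absolutely continuous with respect to Lebesgue measure, with compact support contained in (−∞, a]. Define g(z) = ∫ log(z − s) dμ(s) for z ∈ ℂ∖(−∞, a], using the principal branch of the logarithm. Then for every x < a, lim_{ε→0+} ( g(x + iε) − g(x − iε) ) = 2πi · μ((x, ∞)). In particular, the jump g_+ − g_− equals 2πi for x to the left of the support, is a purely imaginary constant 2πi·μ((b, ∞)) on any interval (a', b') disjoint from the support with b' ≤ a, and is 0 for x to the right of the support (and less than a). -/
/-!
Write `w = x + iε - s`. Since `s` is real, `x - iε - s = conj w`, and off the negative real axis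
`log w - log (conj w) = 2i·arg w`, so the jump of `g` at height `ε` is `2i ∫ arg(x - s + iε) dμ(s)`.
As `ε → 0⁺`, `arg(x - s + iε)` tends to `π` when `s > x` and to `0` when `s < x`; the point `s = x`
is `μ`-null by absolute continuity, and `|arg| ≤ π` dominates, so the integral tends to
`π·μ((x, ∞))`.
-/

open MeasureTheory Filter Set Topology Complex ComplexConjugate Real

namespace Complex

lemma log_sub_log_conj {z : ℂ} (h : z.arg ≠ π) : log z - log (conj z) = 2 * z.arg * I := by
  rw [log_conj z h, sub_conj, log_im]
  push_cast
  ring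

lemma continuousWithinAt_arg_ofReal {t : ℝ} (ht : t ≠ 0) :
    ContinuousWithinAt arg {z : ℂ | 0 ≤ z.im} t := by
  rcases ht.lt_or_gt with ht | ht
  · exact continuousWithinAt_arg_of_re_neg_of_im_zero (by simpa) (ofReal_im t)
  · exact (continuousAt_arg (ofReal_mem_slitPlane.2 ht)).continuousWithinAt

lemma tendsto_arg_ofReal_add_mul_I {t : ℝ} (ht : t ≠ 0) :
    Tendsto (fun ε : ℝ => arg (t + ε * I)) (𝓝[>] 0) (𝓝 (arg t)) := by
  have hmaps : MapsTo (fun ε : ℝ => (t : ℂ) + ε * I) (Ioi 0) {z | 0 ≤ z.im} := fun ε hε => by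
    simpa using le_of_lt hε
  refine (continuousWithinAt_arg_ofReal ht).tendsto.comp
    (tendsto_nhdsWithin_iff.2 ⟨?_, eventually_mem_nhdsWithin.mono hmaps⟩)
  exact (Continuous.tendsto' (by fun_prop) 0 (t : ℂ) (by simp)).mono_left nhdsWithin_le_nhds

lemma arg_ofReal_sub (x s : ℝ) : arg ((x - s : ℝ) : ℂ) = (Ioi x).indicator (fun _ => π) s := by
  rcases lt_or_ge x s with hxs | hsx
  · rw [indicator_of_mem (mem_Ioi.2 hxs), arg_ofReal_of_neg (by linarith)]
  · rw [indicator_of_notMem (notMem_Ioi.2 hsx), arg_ofReal_of_nonneg (by linarith)]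

end Complex

section LogPotential

variable {μ : Measure ℝ} [IsFiniteMeasure μ]

lemma integrable_log_sub_ofReal {K : Set ℝ} (hK : IsCompact K) (hμ : ∀ᵐ s ∂μ, s ∈ K) {z : ℂ}
    (hz : z.im ≠ 0) : Integrable (fun s : ℝ => log (z - s)) μ := by
  have hcont : Continuous fun s : ℝ => log (z - s) :=
    continuous_iff_continuousAt.2 fun s =>
      (continuousAt_clog (mem_slitPlane_iff.2 (Or.inr (by simpa using hz)))).comp (by fun_prop)
  rw [← Measure.restrict_eq_self_of_ae_mem hμ]
  exact hcont.continuousOn.integrableOn_compact hK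

lemma integral_log_sub_integral_log_conj {K : Set ℝ} (hK : IsCompact K) (hμ : ∀ᵐ s ∂μ, s ∈ K)
    {z : ℂ} (hz : z.im ≠ 0) :
    ∫ s, log (z - s) ∂μ - ∫ s, log (conj z - s) ∂μ = 2 * ((∫ s, arg (z - s) ∂μ : ℝ) : ℂ) * I := by
  rw [← integral_sub (integrable_log_sub_ofReal hK hμ hz)
      (integrable_log_sub_ofReal hK hμ (by simpa using hz)),
    ← integral_complex_ofReal, ← integral_const_mul, ← integral_mul_const]
  refine integral_congr_ae (Eventually.of_forall fun s => ?_)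
  have harg : (z - s).arg ≠ π := fun h => hz (by simpa using (arg_eq_pi_iff.1 h).2)
  simp only
  rw [show conj z - s = conj (z - s) by simp, log_sub_log_conj harg]

lemma tendsto_integral_arg_add_mul_I {x : ℝ} (hx : μ {x} = 0) :
    Tendsto (fun ε : ℝ => ∫ s, arg ((x : ℂ) + ε * I - s) ∂μ) (𝓝[>] 0)
      (𝓝 (π * μ.real (Ioi x))) := by
  have hlim : ∫ s, (Ioi x).indicator (fun _ => π) s ∂μ = π * μ.real (Ioi x) := by
    rw [integral_indicator_const _ measurableSet_Ioi, smul_eq_mul, mul_comm]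
  rw [← hlim]
  refine tendsto_integral_filter_of_dominated_convergence (fun _ => π)
    (Eventually.of_forall fun ε => (measurable_arg.comp (by fun_prop)).aestronglyMeasurable)
    (Eventually.of_forall fun ε => Eventually.of_forall fun s => ?_) (integrable_const π) ?_
  · simpa only [Real.norm_eq_abs] using abs_arg_le_pi _
  · filter_upwards [measure_eq_zero_iff_ae_notMem.1 hx] with s hs
    rw [← arg_ofReal_sub]
    convert tendsto_arg_ofReal_add_mul_I (sub_ne_zero.2 (Ne.symm hs)) using 3
    push_cast
    ring

end LogPotential

/-- Jump of the `g`-function across the real axis: for an absolutely continuous compactly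
supported probability measure `μ` with support in `(−∞, a]` and
`g(z) = ∫ log(z − s) dμ(s)`, one has `g₊(x) − g₋(x) = 2πi·μ((x,∞))` for every `x < a`. -/
theorem g_function_jump
    (μ : Measure ℝ) (hprob : IsProbabilityMeasure μ)
    (hac : μ ≪ volume)
    (aR : ℝ) (hsupp : ∃ c : ℝ, μ ((Icc c aR)ᶜ) = 0) :
    ∀ x : ℝ, x < aR →
      Tendsto (fun ε : ℝ =>
          (∫ s : ℝ, Complex.log ((x : ℂ) + ε * Complex.I - (s : ℂ)) ∂μ) -
            ∫ s : ℝ, Complex.log ((x : ℂ) - ε * Complex.I - (s : ℂ)) ∂μ)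
        (nhdsWithin 0 (Ioi 0))
        (nhds (2 * (Real.pi : ℂ) * Complex.I * (((μ (Ioi x)).toReal : ℝ) : ℂ))) := by
  intro x _
  obtain ⟨c, hc⟩ := hsupp
  have hμ : ∀ᵐ s ∂μ, s ∈ Icc c aR := mem_ae_iff.2 hc
  have hjump := ((tendsto_integral_arg_add_mul_I (x := x)
    (hac Real.volume_singleton)).ofReal.const_mul (2 : ℂ)).mul_const I
  rw [show 2 * ((π * μ.real (Ioi x) : ℝ) : ℂ) * I = 2 * π * I * ((μ (Ioi x)).toReal : ℂ) by
    push_cast [Measure.real]; ring] at hjump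
  refine hjump.congr' ?_
  filter_upwards [self_mem_nhdsWithin] with ε (hε : 0 < ε)
  rw [show (x : ℂ) - ε * I = conj ((x : ℂ) + ε * I) by simp [Complex.ext_iff],
    integral_log_sub_integral_log_conj isCompact_Icc hμ (by simpa using hε.ne')]
end

section
/- Let α > −1/2, ψ₀ > 0, δ > 0, and let f be an analytic function on {|z| < δ}, real-valued on (−δ, δ), with f(z) = πψ₀·z + O(z²) as z → 0. For u > 0 and n large enough, set ũ_n = n·f(u/(n·ψ₀)). Then J_{α+1/2}(ũ_n) = J_{α+1/2}(πu) + O(u^{α+3/2}/n) as n → ∞, uniformly for u in bounded subsets of (0,∞): for every bounded B ⊂ (0,∞) there exist C and n₀ such that |J_{α+1/2}(ũ_n) − J_{α+1/2}(πu)| ≤ C·u^{α+3/2}/n for all u ∈ B and n ≥ n₀. -/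
/-!
Write `J_ν(x) = ∑ cₘ (x/2)^(2m+ν)` with `|cₘ| ≤ 1/(Γ(ν+1) m!)`. The mean value theorem, applied
termwise on `[x/2, 3x/2]`, gives `|J_ν(y) - J_ν(x)| ≤ L x^(ν-1) |y - x|` whenever `|y - x| ≤ x/2`
and `x` stays bounded. Taylor's formula for `f` at `0` gives `|ũ_n - πu| ≤ K u²/n`, which is at
most `πu/2` for large `n`; the two bounds combine to `L π^(ν-1) K u^(ν+1)/n`, and
`ν + 1 = α + 3/2`.
-/

open Filter Set

/-- Bessel function of the first kind `J_ν(x)` (series definition). -/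
noncomputable def besselJ (ν x : ℝ) : ℝ :=
  ∑' m : ℕ, ((-1 : ℝ) ^ m / (m.factorial * Real.Gamma ((m : ℝ) + ν + 1))) *
    (x / 2) ^ (2 * (m : ℝ) + ν)

open Real

noncomputable def besselCoeff (ν : ℝ) (m : ℕ) : ℝ :=
  (-1) ^ m / (m.factorial * Gamma (m + ν + 1))

theorem besselJ_eq_tsum (ν x : ℝ) :
    besselJ ν x = ∑' m : ℕ, besselCoeff ν m * (x / 2) ^ (2 * (m : ℝ) + ν) := rfl

theorem Real.Gamma_mul_factorial_le {ν : ℝ} (hν : 0 ≤ ν) (m : ℕ) :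
    Gamma (ν + 1) * m.factorial ≤ Gamma (m + ν + 1) := by
  induction m with
  | zero => simp
  | succ m ih =>
    have hpos : 0 < (m : ℝ) + ν + 1 := by positivity
    calc Gamma (ν + 1) * (m + 1).factorial = (m + 1) * (Gamma (ν + 1) * m.factorial) := by
          push_cast [Nat.factorial_succ]; ring
      _ ≤ (m + ν + 1) * Gamma (m + ν + 1) := by gcongr; linarith
      _ = Gamma ((m + 1 : ℕ) + ν + 1) := by
          rw [← Gamma_add_one hpos.ne']; push_cast; ring_nf

theorem abs_besselCoeff_le {ν : ℝ} (hν : 0 ≤ ν) (m : ℕ) :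
    |besselCoeff ν m| ≤ 1 / (Gamma (ν + 1) * m.factorial) := by
  have hΓ : 0 < Gamma (ν + 1) := Gamma_pos_of_pos (by linarith)
  have hfac : (1 : ℝ) ≤ m.factorial := mod_cast m.factorial_pos
  rw [besselCoeff, abs_div, abs_pow, abs_neg, abs_one, one_pow,
    abs_of_pos (by have := Gamma_pos_of_pos (by positivity : (0 : ℝ) < m + ν + 1); positivity)]
  refine one_div_le_one_div_of_le (by positivity) ?_
  calc Gamma (ν + 1) * m.factorial ≤ m.factorial * (Gamma (ν + 1) * m.factorial) :=
        le_mul_of_one_le_left (by positivity) hfac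
    _ ≤ m.factorial * Gamma (m + ν + 1) := by gcongr; exact Gamma_mul_factorial_le hν m

theorem rpow_two_mul_add {x : ℝ} (hx : 0 < x) (m : ℕ) (ν : ℝ) :
    x ^ (2 * (m : ℝ) + ν) = (x ^ 2) ^ m * x ^ ν := by
  rw [rpow_add hx, ← pow_mul, ← rpow_natCast]; push_cast; rfl

theorem summable_besselCoeff_mul_rpow {ν x : ℝ} (hν : 0 ≤ ν) (hx : 0 < x) :
    Summable fun m : ℕ => besselCoeff ν m * (x / 2) ^ (2 * (m : ℝ) + ν) := by
  refine .of_norm_bounded (((summable_pow_div_factorial ((x / 2) ^ 2)).mul_left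
    ((x / 2) ^ ν / Gamma (ν + 1)))) fun m => ?_
  rw [norm_mul, norm_eq_abs, norm_of_nonneg (by positivity), rpow_two_mul_add (by positivity)]
  calc |besselCoeff ν m| * (((x / 2) ^ 2) ^ m * (x / 2) ^ ν)
      ≤ 1 / (Gamma (ν + 1) * m.factorial) * (((x / 2) ^ 2) ^ m * (x / 2) ^ ν) := by
        gcongr; exact abs_besselCoeff_le hν m
    _ = _ := by ring

theorem two_mul_add_le_mul_two_pow {ν : ℝ} (hν : 0 ≤ ν) (m : ℕ) :
    2 * (m : ℝ) + ν ≤ (2 + ν) * 2 ^ m := by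
  have hm : (m : ℝ) ≤ 2 ^ m := mod_cast Nat.lt_two_pow_self.le
  have h1 : (1 : ℝ) ≤ 2 ^ m := one_le_pow₀ one_le_two
  nlinarith

theorem summable_two_mul_add_mul_abs_besselCoeff {ν : ℝ} (hν : 0 ≤ ν) (y : ℝ) :
    Summable fun m : ℕ => (2 * m + ν) * |besselCoeff ν m| * (y ^ 2) ^ m := by
  refine .of_nonneg_of_le (fun m => by positivity) (fun m => ?_)
    ((summable_pow_div_factorial (2 * y ^ 2)).mul_left ((2 + ν) / Gamma (ν + 1)))
  have hΓ : 0 < Gamma (ν + 1) := Gamma_pos_of_pos (by linarith)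
  calc (2 * m + ν) * |besselCoeff ν m| * (y ^ 2) ^ m
      ≤ (2 + ν) * 2 ^ m * (1 / (Gamma (ν + 1) * m.factorial)) * (y ^ 2) ^ m := by
        gcongr
        · exact two_mul_add_le_mul_two_pow hν m
        · exact abs_besselCoeff_le hν m
    _ = _ := by rw [mul_pow]; field_simp

noncomputable def besselDerivMajorant (ν t : ℝ) : ℝ :=
  ∑' m : ℕ, (2 * m + ν) * |besselCoeff ν m| * ((t / 2) ^ 2) ^ m

theorem besselDerivMajorant_nonneg {ν : ℝ} (hν : 0 ≤ ν) (t : ℝ) : 0 ≤ besselDerivMajorant ν t :=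
  tsum_nonneg fun m => by positivity

theorem besselDerivMajorant_mono {ν t T : ℝ} (hν : 0 ≤ ν) (ht : 0 ≤ t) (htT : t ≤ T) :
    besselDerivMajorant ν t ≤ besselDerivMajorant ν T :=
  Summable.tsum_le_tsum (fun m => by gcongr) (summable_two_mul_add_mul_abs_besselCoeff hν _)
    (summable_two_mul_add_mul_abs_besselCoeff hν _)

theorem rpow_le_rpow_add_rpow_of_mem_Icc {s t z : ℝ} (hs : 0 < s) (hz : z ∈ Icc s t) (a : ℝ) :
    z ^ a ≤ s ^ a + t ^ a := by
  have hz0 : 0 < z := hs.trans_le hz.1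
  rcases le_total 0 a with ha | ha
  · have := rpow_le_rpow hz0.le hz.2 ha
    have := rpow_nonneg hs.le a
    linarith
  · have := rpow_le_rpow_of_nonpos hs hz.1 ha
    have := rpow_nonneg (hz0.trans_le hz.2).le a
    linarith

theorem abs_rpow_two_mul_add_sub_le {s t x y q : ℝ} (m : ℕ) (hq : 0 ≤ q) (hs : 0 < s)
    (hx : x ∈ Icc s t) (hy : y ∈ Icc s t) :
    |y ^ (2 * (m : ℝ) + q) - x ^ (2 * (m : ℝ) + q)| ≤
      (2 * m + q) * (t ^ 2) ^ m * (s ^ (q - 1) + t ^ (q - 1)) * |y - x| := by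
  have hderiv : ∀ z ∈ Icc s t, HasDerivWithinAt (fun z => z ^ (2 * (m : ℝ) + q))
      ((2 * m + q) * z ^ (2 * (m : ℝ) + q - 1)) (Icc s t) z := fun z hz =>
    (hasDerivAt_rpow_const (Or.inl (hs.trans_le hz.1).ne')).hasDerivWithinAt
  refine Convex.norm_image_sub_le_of_norm_hasDerivWithin_le hderiv (fun z hz => ?_)
    (convex_Icc s t) hx hy
  have hz0 : 0 < z := hs.trans_le hz.1
  rw [norm_of_nonneg (by positivity), add_sub_assoc, rpow_two_mul_add hz0, ← mul_assoc]
  gcongr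
  · exact hz.2
  · exact rpow_le_rpow_add_rpow_of_mem_Icc hs hz _

theorem abs_besselJ_sub_le {ν s t x y : ℝ} (hν : 0 ≤ ν) (hs : 0 < s) (hx : x ∈ Icc s t)
    (hy : y ∈ Icc s t) :
    |besselJ ν y - besselJ ν x| ≤
      besselDerivMajorant ν t * ((s / 2) ^ (ν - 1) + (t / 2) ^ (ν - 1)) * |y - x| / 2 := by
  set E := (s / 2) ^ (ν - 1) + (t / 2) ^ (ν - 1)
  have hhalf : ∀ z ∈ Icc s t, z / 2 ∈ Icc (s / 2) (t / 2) := fun z hz =>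
    ⟨by linarith [hz.1], by linarith [hz.2]⟩
  have hterm : ∀ m : ℕ, ‖besselCoeff ν m * (y / 2) ^ (2 * (m : ℝ) + ν) -
      besselCoeff ν m * (x / 2) ^ (2 * (m : ℝ) + ν)‖ ≤
        (2 * m + ν) * |besselCoeff ν m| * ((t / 2) ^ 2) ^ m * (E * |y - x| / 2) := by
    intro m
    rw [← mul_sub, norm_mul, norm_eq_abs, norm_eq_abs]
    calc |besselCoeff ν m| * |(y / 2) ^ (2 * (m : ℝ) + ν) - (x / 2) ^ (2 * (m : ℝ) + ν)|
        ≤ |besselCoeff ν m| * ((2 * m + ν) * ((t / 2) ^ 2) ^ m * E * |y / 2 - x / 2|) := by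
          gcongr
          exact abs_rpow_two_mul_add_sub_le m hν (by positivity) (hhalf x hx) (hhalf y hy)
      _ = _ := by rw [← sub_div, abs_div, abs_two]; ring
  have hx0 : 0 < x := hs.trans_le hx.1
  have hy0 : 0 < y := hs.trans_le hy.1
  rw [besselJ_eq_tsum, besselJ_eq_tsum, ← norm_eq_abs,
    ← (summable_besselCoeff_mul_rpow hν hy0).tsum_sub (summable_besselCoeff_mul_rpow hν hx0)]
  calc _ ≤ ∑' m : ℕ, (2 * m + ν) * |besselCoeff ν m| * ((t / 2) ^ 2) ^ m * (E * |y - x| / 2) :=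
        tsum_of_norm_bounded ((summable_two_mul_add_mul_abs_besselCoeff hν _).mul_right _).hasSum
          hterm
    _ = _ := by rw [tsum_mul_right, besselDerivMajorant]; ring

theorem exists_abs_besselJ_sub_le_mul_rpow {ν : ℝ} (hν : 0 ≤ ν) (X : ℝ) :
    ∃ L ≥ 0, ∀ x y : ℝ, 0 < x → x ≤ X → |y - x| ≤ x / 2 →
      |besselJ ν y - besselJ ν x| ≤ L * x ^ (ν - 1) * |y - x| := by
  set c := ((1 / 4 : ℝ) ^ (ν - 1) + (3 / 4 : ℝ) ^ (ν - 1)) / 2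
  refine ⟨besselDerivMajorant ν (3 * X / 2) * c,
    mul_nonneg (besselDerivMajorant_nonneg hν _) (by positivity), fun x y hx hxX hxy => ?_⟩
  obtain ⟨hxy₁, hxy₂⟩ := abs_le.mp hxy
  calc |besselJ ν y - besselJ ν x|
      ≤ besselDerivMajorant ν (3 * x / 2) *
          ((x / 2 / 2) ^ (ν - 1) + (3 * x / 2 / 2) ^ (ν - 1)) * |y - x| / 2 :=
        abs_besselJ_sub_le hν (by positivity) ⟨by linarith, by linarith⟩ ⟨by linarith, by linarith⟩
    _ = besselDerivMajorant ν (3 * x / 2) * c * x ^ (ν - 1) * |y - x| := by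
        rw [show x / 2 / 2 = 1 / 4 * x by ring, show 3 * x / 2 / 2 = 3 / 4 * x by ring,
          mul_rpow (by norm_num) hx.le, mul_rpow (by norm_num) hx.le]
        ring
    _ ≤ besselDerivMajorant ν (3 * X / 2) * c * x ^ (ν - 1) * |y - x| := by
        gcongr
        exact besselDerivMajorant_mono hν (by positivity) (by linarith)

open Topology Asymptotics in
theorem AnalyticAt.isBigO_sub_sub_smul_deriv {𝕜 E : Type*} [NontriviallyNormedField 𝕜]
    [NormedAddCommGroup E] [NormedSpace 𝕜 E] {f : 𝕜 → E} {x : 𝕜} (hf : AnalyticAt 𝕜 f x) :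
    (fun y => f (x + y) - f x - y • deriv f x) =O[𝓝 0] fun y => ‖y‖ ^ 2 := by
  obtain ⟨p, hp⟩ := hf
  convert hp.isBigO_sub_partialSum_pow 2 using 2 with y
  rw [FormalMultilinearSeries.partialSum, Finset.sum_range_succ, Finset.sum_range_one,
    hp.coeff_zero, hp.deriv, sub_sub]
  simp

theorem AnalyticAt.exists_norm_sub_sub_smul_deriv_le {𝕜 E : Type*} [NontriviallyNormedField 𝕜]
    [NormedAddCommGroup E] [NormedSpace 𝕜 E] {f : 𝕜 → E} {x : 𝕜} (hf : AnalyticAt 𝕜 f x) :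
    ∃ K > 0, ∃ r > 0, ∀ y : 𝕜, ‖y‖ < r → ‖f (x + y) - f x - y • deriv f x‖ ≤ K * ‖y‖ ^ 2 := by
  obtain ⟨K, hK, hKO⟩ := hf.isBigO_sub_sub_smul_deriv.exists_pos
  obtain ⟨r, hr, hball⟩ := Metric.eventually_nhds_iff.mp (Asymptotics.isBigOWith_iff.mp hKO)
  exact ⟨K, hK, r, hr, fun y hy => by simpa using hball (by simpa using hy)⟩

theorem exists_abs_natCast_mul_re_sub_le {f : ℂ → ℂ} {c ψ : ℝ} (hc : 0 < c) (hψ : 0 < ψ)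
    (hf : AnalyticAt ℂ f 0) (hf0 : f 0 = 0) (hf' : deriv f 0 = (c : ℂ) * (ψ : ℂ)) (R : ℝ) :
    ∃ K ≥ 0, ∃ n₀ : ℕ, ∀ u ∈ Ioc 0 R, ∀ n : ℕ, n₀ ≤ n →
      |n * (f ((u / (n * ψ) : ℝ) : ℂ)).re - c * u| ≤ K * u ^ 2 / n ∧
        K * u ^ 2 / n ≤ c * u / 2 := by
  obtain ⟨K, hK, r, hr, hfK⟩ := hf.exists_norm_sub_sub_smul_deriv_le
  obtain ⟨n₀, hn₀⟩ := exists_nat_gt (max (R / (ψ * r)) (2 * K * R / (c * ψ ^ 2)))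
  refine ⟨K / ψ ^ 2, by positivity, n₀, fun u ⟨hu, huR⟩ n hn => ?_⟩
  have hn' := hn₀.trans_le (Nat.cast_le.mpr hn)
  have hnR₁ : R < n * (ψ * r) :=
    (div_lt_iff₀ (by positivity)).mp (le_max_left _ _ |>.trans_lt hn')
  have hnR₂ : 2 * K * R < n * (c * ψ ^ 2) :=
    (div_lt_iff₀ (by positivity)).mp (le_max_right _ _ |>.trans_lt hn')
  have hn0 : (0 : ℝ) < n := (mul_pos_iff_of_pos_right (mul_pos hψ hr)).mp (by linarith)
  set z := u / (n * ψ)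
  have hz : 0 < z := by positivity
  have hfz : ‖f z - c * ψ * z‖ ≤ K * z ^ 2 := by
    have hzr : z < r := by
      rw [div_lt_iff₀ (by positivity)]; nlinarith
    simpa [hf0, hf', abs_of_pos hz, mul_comm] using hfK z (by simpa [abs_of_pos hz] using hzr)
  constructor
  · have hcz : (n : ℝ) * (c * ψ * z) = c * u := by simp only [z]; field_simp
    calc |n * (f z).re - c * u| = n * |(f z - c * ψ * z).re| := by
          rw [← hcz, ← mul_sub, abs_mul, Nat.abs_cast]; congr 2; simp
      _ ≤ n * (K * z ^ 2) := by gcongr; exact (Complex.abs_re_le_norm _).trans hfz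
      _ = K / ψ ^ 2 * u ^ 2 / n := by simp only [z]; field_simp
  · have hKu : 2 * K * u ≤ n * (c * ψ ^ 2) := by nlinarith
    calc K / ψ ^ 2 * u ^ 2 / n = 2 * K * u * u / (2 * ψ ^ 2 * n) := by ring
      _ ≤ n * (c * ψ ^ 2) * u / (2 * ψ ^ 2 * n) := by gcongr
      _ = c * u / 2 := by field_simp

theorem besselJ_plus_asymptotics_general
    (α ψ₀ δ : ℝ) (hα : -1/2 < α) (hψ₀ : 0 < ψ₀) (hδ : 0 < δ)
    (f : ℂ → ℂ)
    (hfan : ∀ z ∈ Metric.ball (0 : ℂ) δ, AnalyticAt ℂ f z)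
    (hf0 : f 0 = 0)
    (hf' : deriv f 0 = (Real.pi : ℂ) * (ψ₀ : ℂ)) :
    ∀ B : Set ℝ, B ⊆ Ioi 0 → Bornology.IsBounded B →
      ∃ C : ℝ, ∃ n₀ : ℕ, ∀ u ∈ B, ∀ n : ℕ, n₀ ≤ n →
        |besselJ (α + 1/2) ((n : ℝ) * (f (((u / ((n : ℝ) * ψ₀)) : ℝ) : ℂ)).re) -
          besselJ (α + 1/2) (Real.pi * u)| ≤ C * u ^ (α + 3/2) / n := by
  intro B hB hBdd
  obtain ⟨R, hR⟩ := hBdd.bddAbove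
  obtain ⟨K, hK, n₀, hclose⟩ := exists_abs_natCast_mul_re_sub_le pi_pos hψ₀
    (hfan 0 (Metric.mem_ball_self hδ)) hf0 hf' R
  obtain ⟨L, hL, hLip⟩ := exists_abs_besselJ_sub_le_mul_rpow (ν := α + 1/2) (by linarith) (π * R)
  refine ⟨L * π ^ (α - 1/2) * K, n₀, fun u hu n hn => ?_⟩
  have hu0 : 0 < u := hB hu
  obtain ⟨hdist, hhalf⟩ := hclose u ⟨hu0, hR hu⟩ n hn
  calc _ ≤ L * (π * u) ^ (α + 1/2 - 1) * |_ - π * u| :=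
        hLip _ _ (by positivity) (by gcongr; exact hR hu) (hdist.trans hhalf)
    _ ≤ L * (π * u) ^ (α + 1/2 - 1) * (K * u ^ 2 / n) := by gcongr
    _ = L * π ^ (α - 1/2) * K * u ^ (α + 3/2) / n := by
        rw [mul_rpow pi_pos.le hu0.le, show α + 3/2 = (α + 1/2 - 1) + (2 : ℕ) by push_cast; ring,
          rpow_add hu0, rpow_natCast]
        ring_nf

/-- With `ũ_n = n·f(u/(nψ₀))`, one has
`J_{α+1/2}(ũ_n) = J_{α+1/2}(πu) + O(u^{α+3/2}/n)`, uniformly for `u` in bounded subsets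
of `(0,∞)`. -/
theorem besselJ_plus_asymptotics
    (α ψ₀ δ : ℝ) (hα : -1/2 < α) (hψ₀ : 0 < ψ₀) (hδ : 0 < δ)
    (f : ℂ → ℂ)
    (hfan : ∀ z ∈ Metric.ball (0 : ℂ) δ, AnalyticAt ℂ f z)
    (hfreal : ∀ x : ℝ, x ∈ Ioo (-δ) δ → (f ((x : ℝ) : ℂ)).im = 0)
    (hf0 : f 0 = 0)
    (hf' : deriv f 0 = (Real.pi : ℂ) * (ψ₀ : ℂ)) :
    ∀ B : Set ℝ, B ⊆ Ioi 0 → Bornology.IsBounded B →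
      ∃ C : ℝ, ∃ n₀ : ℕ, ∀ u ∈ B, ∀ n : ℕ, n₀ ≤ n →
        |besselJ (α + 1/2) ((n : ℝ) * (f (((u / ((n : ℝ) * ψ₀)) : ℝ) : ℂ)).re) -
          besselJ (α + 1/2) (Real.pi * u)| ≤ C * u ^ (α + 3/2) / n :=
  besselJ_plus_asymptotics_general α ψ₀ δ hα hψ₀ hδ f hfan hf0 hf'
end
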